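/- arXiv:2010.09111 — 2 statements merged into one kernel-verified Lean document; each statement's English description precedes it below -/
import Mathlib

section
/- Let P : C^op → Pos be a slat-doctrine over a category C with finite products. The right adjoints ∀_{pr} in the universal completion P^un satisfy the Beck–Chevalley condition for pullbacks of projections: for every arrow f : B → A and object C of C, considering the pullback square with horizontal arrows pr_A : A×C → A and pr_B : B×C → B and vertical arrows f×1_C and f, one has P^un_f ∘ ∀_{pr_A} = ∀_{pr_B} ∘ P^un_{f×1_C} as maps P^un(A×C) → P^un(B). -/
open CategoryTheory CategoryTheory.Limits Opposite

universe u v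

variable {C : Type u} [Category.{v} C] [HasFiniteProducts C]

/-- The fibre of a slat-doctrine `P : Cᵒᵖ ⥤ Pos` over an object `X` of `C`. -/
abbrev Fib (P : Cᵒᵖ ⥤ PartOrd) (X : C) : Type _ := (P.obj (op X) : Type _)

/-- Reindexing along `f : X ⟶ Y` (the monotone map `P f : P Y → P X`). -/
def rIdx (P : Cᵒᵖ ⥤ PartOrd) {X Y : C} (f : X ⟶ Y) (a : Fib P Y) : Fib P X :=
  (P.map f.op).hom.toFun a

/-- Objects of the fibre of a quantifier completion over `A`: triples `(A, B, α)`
with `α ∈ P (A × B)` (the component `A` being fixed). -/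
abbrev QObj (P : Cᵒᵖ ⥤ PartOrd) (A : C) : Type _ := Σ B : C, Fib P (A ⨯ B)

/-- The order of the universal completion `P^un`:
`(A,B,α) ≤ (A,C,γ)` iff there is `g : A×C ⟶ B` with `P⟨pr_A,g⟩(α) ≤ γ`. -/
def UnLe (P : Cᵒᵖ ⥤ PartOrd) {A : C} (x y : QObj P A) : Prop :=
  ∃ g : A ⨯ y.1 ⟶ x.1, rIdx P (prod.lift prod.fst g) x.2 ≤ y.2

/-- The order of the existential completion `P^ex`:
`(A,B,α) ≤ (A,C,γ)` iff there is `f : A×B ⟶ C` with `α ≤ P⟨pr_A,f⟩(γ)`. -/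
def ExLe (P : Cᵒᵖ ⥤ PartOrd) {A : C} (x y : QObj P A) : Prop :=
  ∃ f : A ⨯ x.1 ⟶ y.1, x.2 ≤ rIdx P (prod.lift prod.fst f) y.2

/-- Reindexing of the completions along `f : X ⟶ Y`: `(Y,D,δ) ↦ (X,D,P_{f×1}(δ))`. -/
noncomputable def QReindex (P : Cᵒᵖ ⥤ PartOrd) {X Y : C} (f : X ⟶ Y) (y : QObj P Y) :
    QObj P X :=
  ⟨y.1, rIdx P (prod.map f (𝟙 y.1)) y.2⟩

/-- The right adjoint `∀_{pr₁}` of the universal completion along the projection. -/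
noncomputable def unForall (P : Cᵒᵖ ⥤ PartOrd) (A₁ A₂ : C) (x : QObj P (A₁ ⨯ A₂)) :
    QObj P A₁ :=
  ⟨A₂ ⨯ x.1, rIdx P (prod.associator A₁ A₂ x.1).inv x.2⟩

theorem rIdx_comp {D : Type*} [Category D] (P : Dᵒᵖ ⥤ PartOrd) {X Y Z : D} (g : X ⟶ Y)
    (h : Y ⟶ Z) (a : Fib P Z) :
    rIdx P (g ≫ h) a = rIdx P g (rIdx P h a) := by
  simp [rIdx, op_comp, P.map_comp]

theorem CategoryTheory.Limits.prod.associator_inv_naturality {X₁ X₂ X₃ Y₁ Y₂ Y₃ : C}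
    (f₁ : X₁ ⟶ Y₁) (f₂ : X₂ ⟶ Y₂) (f₃ : X₃ ⟶ Y₃) :
    prod.map f₁ (prod.map f₂ f₃) ≫ (prod.associator Y₁ Y₂ Y₃).inv =
      (prod.associator X₁ X₂ X₃).inv ≫ prod.map (prod.map f₁ f₂) f₃ := by
  rw [Iso.comp_inv_eq, Category.assoc, prod.associator_naturality, Iso.inv_hom_id_assoc]

/-- Beck–Chevalley for the universal completion: for `f : B ⟶ A` and any object `Cc`,
`P^un_f ∘ ∀_{pr_A} = ∀_{pr_B} ∘ P^un_{f×1}` as maps `P^un(A×Cc) → P^un(B)`. -/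
theorem unForall_beck_chevalley (P : Cᵒᵖ ⥤ PartOrd) {A B : C} (f : B ⟶ A) (Cc : C)
    (x : QObj P (A ⨯ Cc)) :
    QReindex P f (unForall P A Cc x) =
      unForall P B Cc (QReindex P (prod.map f (𝟙 Cc)) x) := by
  refine Sigma.ext rfl (heq_of_eq ?_)
  have square : prod.map f (𝟙 (Cc ⨯ x.1)) ≫ (prod.associator A Cc x.1).inv =
      (prod.associator B Cc x.1).inv ≫ prod.map (prod.map f (𝟙 Cc)) (𝟙 x.1) := by
    rw [← prod.map_id_id]
    exact prod.associator_inv_naturality f (𝟙 Cc) (𝟙 x.1)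
  show rIdx P (prod.map f (𝟙 (Cc ⨯ x.1))) (rIdx P (prod.associator A Cc x.1).inv x.2) =
    rIdx P (prod.associator B Cc x.1).inv (rIdx P (prod.map (prod.map f (𝟙 Cc)) (𝟙 x.1)) x.2)
  rw [← rIdx_comp, ← rIdx_comp, square]
end

section
/- Let P : C^op → Pos be a slat-doctrine over a category C with finite products, whose fibres have finite joins preserved by reindexing. Then the universal completion P^un satisfies the Counterexample Property: if (A,B,α) ≤ ⊥ holds in P^un(A) for α ∈ P(A×B), where ⊥ = (A,1,⊥_{A×1}), then there exists an arrow g : A → B of C (a counterexample) such that P_{⟨1_A,g⟩}(α) ≤ ⊥_A in P(A). -/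
open CategoryTheory CategoryTheory.Limits Opposite

universe u v

variable {C : Type u} [Category.{v} C] [HasFiniteProducts C]

/-! The counterexample is the witness `g : A × 1 ⟶ B` of `(A,B,α) ≤ ⊥` precomposed with
`⟨1_A, !_A⟩ : A ⟶ A × 1`; reindexing along that arrow keeps `⊥_{A×1}` at `⊥_A`. -/

section

variable (P : Cᵒᵖ ⥤ PartOrd)

omit [HasFiniteProducts C] in
theorem rIdx_comp_s15 {X Y Z : C} (f : X ⟶ Y) (k : Y ⟶ Z) (a : Fib P Z) :
    rIdx P (f ≫ k) a = rIdx P f (rIdx P k a) := by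
  simp [rIdx]

omit [HasFiniteProducts C] in
theorem rIdx_mono {X Y : C} (f : X ⟶ Y) : Monotone (rIdx P f) :=
  (P.map f.op).hom.monotone

theorem UnLe.exists_le_rIdx_graph {A : C} {x y : QObj P A} (h : UnLe P x y) (d : A ⟶ y.1) :
    ∃ g : A ⟶ x.1, rIdx P (prod.lift (𝟙 A) g) x.2 ≤ rIdx P (prod.lift (𝟙 A) d) y.2 := by
  obtain ⟨g, hg⟩ := h
  refine ⟨prod.lift (𝟙 A) d ≫ g, ?_⟩
  have graph_comp : prod.lift (𝟙 A) (prod.lift (𝟙 A) d ≫ g)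
      = prod.lift (𝟙 A) d ≫ prod.lift prod.fst g := by
    rw [prod.comp_lift, prod.lift_fst]
  rw [graph_comp, rIdx_comp_s15]
  exact rIdx_mono P _ hg

end

theorem unCompletion_counterexample_general (P : Cᵒᵖ ⥤ PartOrd)
    (Bt : ∀ X : C, Fib P X)
    (hBtpres : ∀ {X Y : C} (f : X ⟶ Y), rIdx P f (Bt Y) = Bt X)
    (A B : C) (α : Fib P (A ⨯ B))
    (h : UnLe P (⟨B, α⟩ : QObj P A) ⟨⊤_ C, Bt (A ⨯ ⊤_ C)⟩) :
    ∃ g : A ⟶ B, rIdx P (prod.lift (𝟙 A) g) α ≤ Bt A := by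
  obtain ⟨g, hg⟩ := h.exists_le_rIdx_graph P (terminal.from A)
  exact ⟨g, hBtpres (prod.lift (𝟙 A) (terminal.from A)) ▸ hg⟩

/-- Counterexample Property for the universal completion: if the fibres of `P` have finite
joins (binary joins `sup` and a bottom `Bt`) preserved by reindexing, and
`(A,B,α) ≤ ⊥` holds in `P^un(A)`, then there is a counterexample `g : A ⟶ B` with
`P⟨1_A,g⟩(α) ≤ ⊥_A`. -/
theorem unCompletion_counterexample (P : Cᵒᵖ ⥤ PartOrd)
    (Bt : ∀ X : C, Fib P X)
    (hBt : ∀ (X : C) (a : Fib P X), Bt X ≤ a)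
    (hBtpres : ∀ {X Y : C} (f : X ⟶ Y), rIdx P f (Bt Y) = Bt X)
    (sup : ∀ X : C, Fib P X → Fib P X → Fib P X)
    (le_sup_left : ∀ (X : C) (a b : Fib P X), a ≤ sup X a b)
    (le_sup_right : ∀ (X : C) (a b : Fib P X), b ≤ sup X a b)
    (sup_le : ∀ (X : C) (a b c : Fib P X), a ≤ c → b ≤ c → sup X a b ≤ c)
    (hpres : ∀ {X Y : C} (f : X ⟶ Y) (a b : Fib P Y),
      rIdx P f (sup Y a b) = sup X (rIdx P f a) (rIdx P f b))
    (A B : C) (α : Fib P (A ⨯ B))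
    (h : UnLe P (⟨B, α⟩ : QObj P A) ⟨⊤_ C, Bt (A ⨯ ⊤_ C)⟩) :
    ∃ g : A ⟶ B, rIdx P (prod.lift (𝟙 A) g) α ≤ Bt A :=
  unCompletion_counterexample_general P Bt hBtpres A B α h
end
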